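/- Let G be a finite group with normal p-complement N, let x ∈ G be a p-element, let P ∈ Syl_p(G) contain x, and write S = Sub_G(x). Then N ∩ S equals the normal closure of C_N(x) in S, this is a normal p-complement of S, and S = C_N(x)^S · P. -/

import Mathlib

/-- `H` is a normal subgroup of `K` (in particular `H ≤ K`). -/
def normalIn {G : Type*} [Group G] (H K : Subgroup G) : Prop :=
  H ≤ K ∧ ∀ k ∈ K, ∀ h ∈ H, k * h * k⁻¹ ∈ H

/-- `H` is subnormal in `K`: there is a chain `H = H₀ ⊴ H₁ ⊴ ⋯ ⊴ Hₙ = K`. -/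
def subnormalIn {G : Type*} [Group G] (H K : Subgroup G) : Prop :=
  ∃ n : ℕ, ∃ f : Fin (n + 1) → Subgroup G,
    f 0 = H ∧ f (Fin.last n) = K ∧ ∀ i : Fin n, normalIn (f i.castSucc) (f i.succ)

/-- The subnormalizer subset `S_G(x) = {y ∈ G : ⟨x⟩ is subnormal in ⟨x, y⟩}`. -/
def subnSet {G : Type*} [Group G] (x : G) : Set G :=
  {y | subnormalIn (Subgroup.zpowers x) (Subgroup.closure {x, y})}

/-- The subnormalizer `Sub_G(x) = ⟨S_G(x)⟩`. -/
def SubG {G : Type*} [Group G] (x : G) : Subgroup G :=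
  Subgroup.closure (subnSet x)


/-- The normal closure of `C_N(x)` in `Sub_G(x)`: the subgroup generated by all
`Sub_G(x)`-conjugates of `C_N(x)`. -/
def CNclosure {G : Type*} [Group G] (N : Subgroup G) (x : G) : Subgroup G :=
  Subgroup.closure
    {g | ∃ s ∈ SubG x, ∃ c ∈ N ⊓ Subgroup.centralizer {x}, g = s * c * s⁻¹}

/-!
The heart of the matter is `Sub_G(x) = ⟨C_N(x), P⟩`. Elements of `C_N(x)` commute with `x`, and an
element of `P` generates with `x` a `p`-group, in which every subgroup is subnormal; so both lie in
`S_G(x)`. Conversely, if `⟨x⟩` is subnormal in `K = ⟨x, y⟩`, then `x` lies in a normal `p`-subgroup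
`X` of `K` (push a normal `p`-subgroup up the subnormal chain by taking normal closures: all
conjugates are normal `p`-subgroups of the previous term, hence lie in one of its Sylow subgroups).
Write `y = m q` with `m` a `p'`-element, so `m ∈ N`, and `q` a `p`-element. Then `[x, m] ∈ X ∩ N = 1`,
and the `p`-group `X⟨q⟩` is conjugated into `P` by some `n ∈ N` (as `G = N P`), which centralises
`x` because `x⁻¹ xⁿ ∈ N ∩ P = 1`. Hence `y = m · n qⁿ n⁻¹ ∈ ⟨C_N(x), P⟩`.

With `D` the normal closure of `C_N(x)` in `S = Sub_G(x)` this gives `S = D P` with `D ≤ N`, and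
Dedekind's law yields `N ∩ S = D (N ∩ P) = D`; the index of `D` in `S` divides `|G : N|`.
-/

open Subgroup
open scoped Pointwise

section Subnormality

variable {G : Type*} [Group G]

lemma normalIn_refl (H : Subgroup G) : normalIn H H :=
  ⟨le_rfl, fun _ hk _ hh => mul_mem (mul_mem hk hh) (inv_mem hk)⟩

lemma normalIn_normalizer (H : Subgroup G) : normalIn H (normalizer (H : Set G)) :=
  ⟨le_normalizer, fun _ hk h hh => (mem_normalizer_iff.mp hk h).mp hh⟩

lemma le_normalizer_of_normalIn {H K : Subgroup G} (h : normalIn H K) :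
    K ≤ normalizer (H : Set G) := fun k hk =>
  mem_normalizer_iff.mpr fun z => ⟨h.2 k hk z, fun hz => by
    simpa [mul_assoc] using h.2 k⁻¹ (inv_mem hk) _ hz⟩

lemma subnormalIn_refl (H : Subgroup G) : subnormalIn H H :=
  ⟨0, fun _ => H, rfl, rfl, fun i => i.elim0⟩

lemma subnormalIn_of_normalIn_of_subnormalIn {H K T : Subgroup G} (hHK : normalIn H K)
    (hKT : subnormalIn K T) : subnormalIn H T := by
  obtain ⟨n, f, rfl, rfl, hf⟩ := hKT
  refine ⟨n + 1, Fin.cons H f, rfl, rfl, Fin.cases hHK fun i => ?_⟩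
  simpa [← Fin.succ_castSucc] using hf i

lemma subnormalIn_map {G' : Type*} [Group G'] (φ : G →* G') {H K : Subgroup G}
    (h : subnormalIn H K) : subnormalIn (H.map φ) (K.map φ) := by
  obtain ⟨n, f, rfl, rfl, hf⟩ := h
  refine ⟨n, fun i => (f i).map φ, rfl, rfl, fun i => ⟨map_mono (hf i).1, ?_⟩⟩
  rintro _ ⟨k, hk, rfl⟩ _ ⟨h, hh, rfl⟩
  exact ⟨k * h * k⁻¹, (hf i).2 k hk h hh, by simp⟩

end Subnormality

section PGroup

variable {p : ℕ} [Fact p.Prime] {G : Type*} [Group G] [Finite G]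

lemma subnormalIn_top_of_isPGroup (hG : IsPGroup p G) (H : Subgroup G) : subnormalIn H ⊤ := by
  have := hG.isNilpotent
  induction H using WellFoundedGT.induction with
  | _ H ih =>
    rcases eq_or_ne H ⊤ with rfl | hH
    · exact subnormalIn_refl ⊤
    · exact subnormalIn_of_normalIn_of_subnormalIn (normalIn_normalizer H)
        (ih _ (Group.normalizerCondition_of_isNilpotent H hH.lt_top))

lemma subnormalIn_of_isPGroup {A B : Subgroup G} (hB : IsPGroup p B) (hAB : A ≤ B) :
    subnormalIn A B := by
  have h := subnormalIn_map B.subtype (subnormalIn_top_of_isPGroup hB (A.subgroupOf B))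
  rwa [subgroupOf_map_subtype, inf_eq_left.mpr hAB, ← MonoidHom.range_eq_map,
    range_subtype] at h

end PGroup

section ConjClosure

variable {G : Type*} [Group G]

/-- The normal closure `A^K` of `A` in `K`; `CNclosure N x` is by definition
`conjClosure (SubG x) (N ⊓ centralizer {x})`. -/
def conjClosure (K A : Subgroup G) : Subgroup G :=
  closure {g | ∃ k ∈ K, ∃ a ∈ A, g = k * a * k⁻¹}

lemma le_conjClosure (K A : Subgroup G) : A ≤ conjClosure K A := fun a ha =>
  subset_closure ⟨1, one_mem K, a, ha, by group⟩

lemma conjClosure_le {K A L : Subgroup G} (h : ∀ k ∈ K, ∀ a ∈ A, k * a * k⁻¹ ∈ L) :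
    conjClosure K A ≤ L :=
  closure_le _ |>.mpr fun _ ⟨k, hk, a, ha, hg⟩ => hg ▸ h k hk a ha

lemma conj_mem_conjClosure {K A : Subgroup G} {k g : G} (hk : k ∈ K)
    (hg : g ∈ conjClosure K A) : k * g * k⁻¹ ∈ conjClosure K A := by
  have : conjClosure K A ≤ (conjClosure K A).comap (MulAut.conj k).toMonoidHom :=
    conjClosure_le fun k' hk' a ha => subset_closure ⟨k * k', mul_mem hk hk', a, ha, by
      simp only [MulEquiv.coe_toMonoidHom, MulAut.conj_apply]; group⟩
  exact this hg

lemma normalIn_conjClosure {K A : Subgroup G} (hAK : A ≤ K) : normalIn (conjClosure K A) K :=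
  ⟨conjClosure_le fun _ hk _ ha => mul_mem (mul_mem hk (hAK ha)) (inv_mem hk),
    fun _ hk _ hg => conj_mem_conjClosure hk hg⟩

lemma normalIn_map_conj {Y H' H : Subgroup G} (hY : normalIn Y H') (hH' : normalIn H' H)
    {h : G} (hh : h ∈ H) : normalIn (Y.map (MulAut.conj h).toMonoidHom) H' := by
  refine ⟨?_, ?_⟩
  · rintro _ ⟨y, hy, rfl⟩
    exact hH'.2 h hh y (hY.1 hy)
  · rintro k hk _ ⟨y, hy, rfl⟩
    have hk' : h⁻¹ * k * h⁻¹⁻¹ ∈ H' := hH'.2 h⁻¹ (inv_mem hh) k hk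
    refine ⟨_, hY.2 _ hk' y hy, ?_⟩
    simp only [MulEquiv.coe_toMonoidHom, MulAut.conj_apply]
    group

end ConjClosure

section NormalPSubgroup

variable {p : ℕ} {G : Type*} [Group G]

lemma exists_isPGroup_forall_normalIn_le (H : Subgroup G) :
    ∃ R : Subgroup G, IsPGroup p R ∧
      ∀ Z : Subgroup G, IsPGroup p Z → normalIn Z H → Z ≤ R := by
  obtain ⟨Q⟩ : Nonempty (Sylow p H) := inferInstance
  refine ⟨(Q : Subgroup H).map H.subtype, Q.isPGroup'.map _, fun Z hZ hZH z hz => ?_⟩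
  have : (Z.subgroupOf H).Normal := ⟨fun a ha g => hZH.2 g g.2 a ha⟩
  have hZp : IsPGroup p (Z.subgroupOf H) := hZ.comap_of_injective _ H.subtype_injective
  exact ⟨⟨z, hZH.1 hz⟩, hZp.le_sylow_of_normal Q hz, rfl⟩

lemma exists_isPGroup_normalIn_of_normalIn {Y H' H : Subgroup G} (hY : IsPGroup p Y)
    (hYH' : normalIn Y H') (hH'H : normalIn H' H) :
    ∃ X : Subgroup G, Y ≤ X ∧ IsPGroup p X ∧ normalIn X H := by
  obtain ⟨R, hR, hZR⟩ := exists_isPGroup_forall_normalIn_le (p := p) H'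
  have hYH : Y ≤ H := hYH'.1.trans hH'H.1
  refine ⟨conjClosure H Y, le_conjClosure H Y, hR.to_le ?_, normalIn_conjClosure hYH⟩
  exact conjClosure_le fun h hh y hy =>
    hZR _ (hY.map _) (normalIn_map_conj hYH' hH'H hh) ⟨y, hy, rfl⟩

lemma exists_isPGroup_normalIn_of_subnormalIn {A K : Subgroup G} (hA : IsPGroup p A)
    (h : subnormalIn A K) : ∃ X : Subgroup G, A ≤ X ∧ IsPGroup p X ∧ normalIn X K := by
  obtain ⟨n, f, rfl, rfl, hf⟩ := h
  suffices ∀ i, ∃ X : Subgroup G, f 0 ≤ X ∧ IsPGroup p X ∧ normalIn X (f i) from this _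
  intro i
  induction i using Fin.induction with
  | zero => exact ⟨f 0, le_rfl, hA, normalIn_refl _⟩
  | succ i ih =>
    obtain ⟨Y, hAY, hY, hYf⟩ := ih
    obtain ⟨X, hYX, hX, hXf⟩ := exists_isPGroup_normalIn_of_normalIn hY hYf (hf i)
    exact ⟨X, hAY.trans hYX, hX, hXf⟩

end NormalPSubgroup

section Elements

variable {G : Type*} [Group G]

lemma isPGroup_zpowers_of_pow_eq_one {p k : ℕ} {g : G} (h : g ^ p ^ k = 1) :
    IsPGroup p (zpowers g) :=
  IsPGroup.of_card_dvd_pow (n := k) (by rw [Nat.card_zpowers]; exact orderOf_dvd_of_pow_eq_one h)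

lemma exists_mul_eq_coprime_part_prime_pow_part {p : ℕ} (hp : p.Prime) [Finite G] (g : G) :
    ∃ r k : ℕ, p.Coprime r ∧ ∃ m ∈ zpowers g, ∃ q ∈ zpowers g,
      m * q = g ∧ m ^ r = 1 ∧ q ^ p ^ k = 1 := by
  set d := orderOf g
  have hd : d ≠ 0 := (orderOf_pos g).ne'
  have hr : p.Coprime (ordCompl[p] d) := Nat.coprime_ordCompl hp hd
  set a := d.factorization p
  set r := ordCompl[p] d
  have hdecomp : (d : ℤ) = ((p ^ a : ℕ) : ℤ) * r := by
    rw [← Nat.cast_mul, Nat.ordProj_mul_ordCompl_eq_self]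
  obtain ⟨u, v, huv⟩ := Nat.isCoprime_iff_coprime.mpr (hr.pow_left a)
  have hpow : ∀ n : ℤ, g ^ ((d : ℤ) * n) = 1 := fun n => by
    rw [zpow_mul, zpow_natCast, pow_orderOf_eq_one, one_zpow]
  refine ⟨r, a, hr, g ^ (u * (p ^ a : ℕ)), zpow_mem (mem_zpowers g) _,
    g ^ (v * r), zpow_mem (mem_zpowers g) _, ?_, ?_, ?_⟩
  · rw [← zpow_add, huv, zpow_one]
  · rw [← zpow_natCast, ← zpow_mul, ← hpow u, hdecomp]
    ring_nf
  · rw [← zpow_natCast, ← zpow_mul, ← hpow v, hdecomp]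
    ring_nf

end Elements

section NormalComplement

variable {G : Type*} [Group G] {p : ℕ} {N : Subgroup G}

lemma mem_centralizer_of_disjoint [N.Normal] {X : Subgroup G} (hXN : Disjoint X N) {x m : G}
    (hx : x ∈ X) (hm : m ∈ N) (hmX : m ∈ normalizer (X : Set G)) : m ∈ centralizer {x} := by
  have hX : x * (m * x⁻¹ * m⁻¹) ∈ X :=
    mul_mem hx ((mem_normalizer_iff.mp hmX _).mp (inv_mem hx))
  have hN : x * (m * x⁻¹ * m⁻¹) ∈ N := by
    simpa only [← mul_assoc] using mul_mem (Normal.conj_mem ‹_› m hm x) (inv_mem hm)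
  rw [mem_centralizer_singleton_iff]
  calc m * x = (x * (m * x⁻¹ * m⁻¹))⁻¹ * (x * m) := by group
    _ = x * m := by rw [disjoint_def.mp hXN hX hN, inv_one, one_mul]

lemma mem_of_pow_eq_one_of_coprime [N.Normal] (hquot : IsPGroup p (G ⧸ N)) {g : G} {r : ℕ}
    (hr : p.Coprime r) (hg : g ^ r = 1) : g ∈ N := by
  rw [← QuotientGroup.eq_one_iff, ← orderOf_eq_one_iff]
  refine Nat.Coprime.eq_one_of_dvd (hquot.orderOf_coprime hr _) (orderOf_dvd_of_pow_eq_one ?_)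
  rw [← QuotientGroup.mk_pow, hg, QuotientGroup.mk_one]

variable [Fact p.Prime] [Finite G]

lemma disjoint_of_isPGroup {X : Subgroup G} (hX : IsPGroup p X) (hN : ¬ p ∣ Nat.card N) :
    Disjoint X N := by
  obtain ⟨k, hk⟩ := IsPGroup.iff_card.mp hX
  refine disjoint_of_coprime_natCard ?_
  rw [hk]
  exact ((Nat.Prime.coprime_iff_not_dvd Fact.out).mpr hN).pow_left k

lemma sup_sylow_eq_top [N.Normal] (hquot : IsPGroup p (G ⧸ N)) (P : Sylow p G) :
    N ⊔ (P : Subgroup G) = ⊤ := by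
  obtain ⟨a, ha⟩ := IsPGroup.iff_card.mp hquot
  have hcop : (p ^ a).Coprime (P : Subgroup G).index :=
    ((Nat.Prime.coprime_iff_not_dvd Fact.out).mpr P.not_dvd_index).pow_left a
  rw [← index_eq_one]
  refine Nat.eq_one_of_dvd_coprimes hcop ?_ (index_dvd_of_le le_sup_right)
  rw [← ha, ← index_eq_card]
  exact index_dvd_of_le le_sup_left

lemma exists_mem_centralizer_conj_mem_sylow [N.Normal] (hquot : IsPGroup p (G ⧸ N))
    (hN : ¬ p ∣ Nat.card N) {P : Sylow p G} {x : G} (hxP : x ∈ P) {R : Subgroup G}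
    (hR : IsPGroup p R) (hxR : x ∈ R) :
    ∃ n ∈ N ⊓ centralizer {x}, ∀ z ∈ R, n⁻¹ * z * n ∈ (P : Subgroup G) := by
  obtain ⟨Q, hRQ⟩ := hR.exists_le_sylow
  obtain ⟨g, rfl⟩ := MulAction.exists_smul_eq G P Q
  obtain ⟨n, hn, w, hw, rfl⟩ : g ∈ (N : Set G) * ((P : Subgroup G) : Set G) := by
    rw [← normal_mul, sup_sylow_eq_top hquot P]
    trivial
  have hconj : ∀ z ∈ R, n⁻¹ * z * n ∈ (P : Subgroup G) := fun z hz => by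
    have hz' := hRQ hz
    rw [Sylow.coe_subgroup_smul, mem_pointwise_smul_iff_inv_smul_mem] at hz'
    have hz'' : w * (n * w)⁻¹ * z * (n * w) * w⁻¹ ∈ (P : Subgroup G) := by
      simpa only [MulAut.smul_def, map_inv, MulAut.conj_inv_apply, mul_assoc]
        using mul_mem (mul_mem hw hz') (inv_mem hw)
    simpa only [mul_inv_rev, mul_assoc, mul_inv_cancel_left, mul_inv_cancel, mul_one] using hz''
  have hxN : x⁻¹ * (n⁻¹ * x * n) ∈ N := by
    simpa only [inv_inv, ← mul_assoc] using
      mul_mem (Normal.conj_mem ‹_› n⁻¹ (inv_mem hn) x⁻¹) hn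
  have hx : x = n⁻¹ * x * n := inv_mul_eq_one.mp <| disjoint_def.mp
    (disjoint_of_isPGroup P.isPGroup' hN) (mul_mem (inv_mem hxP) (hconj x hxR)) hxN
  refine ⟨n, ⟨hn, mem_centralizer_singleton_iff.mpr ?_⟩, hconj⟩
  calc n * x = n * (n⁻¹ * x * n) := by rw [← hx]
    _ = x * n := by group

end NormalComplement

section Subnormalizer

variable {G : Type*} [Group G]

lemma zpowers_le_closure_pair (x y : G) : zpowers x ≤ closure {x, y} :=
  zpowers_le.mpr (subset_closure (Set.mem_insert x _))

lemma mem_subnSet_of_mem_centralizer {x c : G} (hc : c ∈ centralizer {x}) : c ∈ subnSet x := by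
  have hcent : closure {x, c} ≤ centralizer {x} :=
    closure_le _ |>.mpr <| Set.insert_subset (mem_centralizer_singleton_iff.mpr rfl)
      (Set.singleton_subset_iff.mpr hc)
  refine subnormalIn_of_normalIn_of_subnormalIn ⟨zpowers_le_closure_pair x c, ?_⟩
    (subnormalIn_refl _)
  rintro k hk _ ⟨b, rfl⟩
  have hkx : Commute k x := mem_centralizer_singleton_iff.mp (hcent hk)
  rw [(hkx.zpow_right b).eq, mul_inv_cancel_right]
  exact zpow_mem_zpowers x b

lemma mem_subnSet_of_isPGroup {p : ℕ} [Fact p.Prime] [Finite G] {P : Subgroup G}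
    (hP : IsPGroup p P) {x y : G} (hx : x ∈ P) (hy : y ∈ P) : y ∈ subnSet x :=
  subnormalIn_of_isPGroup (hP.to_le <| closure_le _ |>.mpr <|
    Set.insert_subset hx (Set.singleton_subset_iff.mpr hy)) (zpowers_le_closure_pair x y)

variable {p : ℕ} [Fact p.Prime] [Finite G] {N : Subgroup G} [N.Normal]

lemma mem_sup_of_mem_subnSet (hquot : IsPGroup p (G ⧸ N)) (hN : ¬ p ∣ Nat.card N)
    {P : Sylow p G} {x y : G} (hxP : x ∈ P) (hy : y ∈ subnSet x) :
    y ∈ (N ⊓ centralizer {x}) ⊔ (P : Subgroup G) := by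
  obtain ⟨X, hxX, hX, hXK⟩ := exists_isPGroup_normalIn_of_subnormalIn
    (P.isPGroup'.to_le (zpowers_le.mpr hxP)) hy
  have hK := le_normalizer_of_normalIn hXK
  have hyK : zpowers y ≤ closure {x, y} :=
    zpowers_le.mpr (subset_closure (Set.mem_insert_of_mem x rfl))
  obtain ⟨r, k, hr, m, hm, q, hq, rfl, hmr, hqk⟩ :=
    exists_mul_eq_coprime_part_prime_pow_part (Fact.out : p.Prime) y
  have hmC : m ∈ N ⊓ centralizer {x} := by
    have hmN := mem_of_pow_eq_one_of_coprime hquot hr hmr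
    exact ⟨hmN, mem_centralizer_of_disjoint (disjoint_of_isPGroup hX hN)
      (hxX (mem_zpowers x)) hmN (hK (hyK hm))⟩
  have hXq : IsPGroup p (X ⊔ zpowers q : Subgroup G) :=
    hX.to_sup_of_normal_left' (isPGroup_zpowers_of_pow_eq_one hqk)
      (zpowers_le.mpr (hK (hyK hq)))
  obtain ⟨n, hn, hnP⟩ := exists_mem_centralizer_conj_mem_sylow hquot hN hxP hXq
    (mem_sup_left (hxX (mem_zpowers x)))
  have hqC : q ∈ (N ⊓ centralizer {x}) ⊔ (P : Subgroup G) := by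
    rw [show q = n * (n⁻¹ * q * n) * n⁻¹ by group]
    exact mul_mem (mul_mem (mem_sup_left hn) (mem_sup_right (hnP q (mem_sup_right
      (mem_zpowers q))))) (inv_mem (mem_sup_left hn))
  exact mul_mem (mem_sup_left hmC) hqC

lemma subG_eq_sup (hquot : IsPGroup p (G ⧸ N)) (hN : ¬ p ∣ Nat.card N) {P : Sylow p G}
    {x : G} (hxP : x ∈ P) : SubG x = (N ⊓ centralizer {x}) ⊔ (P : Subgroup G) :=
  le_antisymm (closure_le _ |>.mpr fun _ hy => mem_sup_of_mem_subnSet hquot hN hxP hy) <|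
    sup_le (fun _ hc => subset_closure (mem_subnSet_of_mem_centralizer hc.2))
      (fun _ hy => subset_closure (mem_subnSet_of_isPGroup P.isPGroup' hxP hy))

end Subnormalizer

section Complement

variable {G : Type*} [Group G]

lemma inf_sup_eq_of_le_normalizer {D N P : Subgroup G} (hDN : D ≤ N)
    (hP : P ≤ normalizer (D : Set G)) (hNP : Disjoint N P) : N ⊓ (D ⊔ P) = D := by
  apply SetLike.coe_injective
  rw [coe_inf, coe_mul_of_right_le_normalizer_left D P hP, Set.inter_comm,
    ← mul_inf_assoc D P N hDN, inf_comm, hNP.eq_bot, coe_bot, Set.singleton_one, mul_one]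

lemma exists_relIndex_eq_pow {p : ℕ} [Fact p.Prime] [Finite G] {N : Subgroup G} [N.Normal]
    (hquot : IsPGroup p (G ⧸ N)) (K : Subgroup G) : ∃ k : ℕ, N.relIndex K = p ^ k := by
  obtain ⟨a, ha⟩ := IsPGroup.iff_card.mp hquot
  obtain ⟨k, -, hk⟩ := (Nat.dvd_prime_pow Fact.out).mp
    (ha ▸ index_eq_card N ▸ N.relIndex_dvd_index_of_normal K)
  exact ⟨k, hk⟩

end Complement

theorem stmt_7_general {G : Type*} [Group G] [Finite G] (p : ℕ) (hp : p.Prime)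
    (N : Subgroup G) (hN : N.Normal) (hN' : ¬ p ∣ Nat.card N)
    (hquot : IsPGroup p (G ⧸ N))
    (x : G)
    (P : Sylow p G) (hxP : x ∈ P) :
    N ⊓ SubG x = CNclosure N x ∧
      CNclosure N x ≤ SubG x ∧
      (∀ s ∈ SubG x, ∀ c ∈ CNclosure N x, s * c * s⁻¹ ∈ CNclosure N x) ∧
      (¬ p ∣ Nat.card (CNclosure N x)) ∧
      (∃ k : ℕ, ((CNclosure N x).subgroupOf (SubG x)).index = p ^ k) ∧
      SubG x = CNclosure N x ⊔ (P : Subgroup G) := by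
  have : Fact p.Prime := ⟨hp⟩
  have hS : SubG x = (N ⊓ centralizer {x}) ⊔ (P : Subgroup G) := subG_eq_sup hquot hN' hxP
  have hD : normalIn (CNclosure N x) (SubG x) := normalIn_conjClosure (le_sup_left.trans hS.ge)
  have hDN : CNclosure N x ≤ N := conjClosure_le fun k _ c hc => hN.conj_mem c hc.1 k
  have hPS : (P : Subgroup G) ≤ SubG x := le_sup_right.trans hS.ge
  have hSDP : SubG x = CNclosure N x ⊔ (P : Subgroup G) :=
    le_antisymm (hS.le.trans (sup_le_sup_right (le_conjClosure _ _) _)) (sup_le hD.1 hPS)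
  have hinf : N ⊓ SubG x = CNclosure N x := by
    rw [hSDP]
    exact inf_sup_eq_of_le_normalizer hDN (hPS.trans (le_normalizer_of_normalIn hD))
      (disjoint_of_isPGroup P.isPGroup' hN').symm
  refine ⟨hinf, hD.1, hD.2, fun h => hN' (h.trans (card_dvd_of_le hDN)), ?_, hSDP⟩
  rw [← hinf, inf_subgroupOf_right]
  exact exists_relIndex_eq_pow hquot (SubG x)

theorem stmt_7 {G : Type*} [Group G] [Finite G] (p : ℕ) (hp : p.Prime)
    (N : Subgroup G) (hN : N.Normal) (hN' : ¬ p ∣ Nat.card N)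
    (hquot : IsPGroup p (G ⧸ N))
    (x : G) (hx : ∃ n : ℕ, orderOf x = p ^ n)
    (P : Sylow p G) (hxP : x ∈ P) :
    N ⊓ SubG x = CNclosure N x ∧
      CNclosure N x ≤ SubG x ∧
      (∀ s ∈ SubG x, ∀ c ∈ CNclosure N x, s * c * s⁻¹ ∈ CNclosure N x) ∧
      (¬ p ∣ Nat.card (CNclosure N x)) ∧
      (∃ k : ℕ, ((CNclosure N x).subgroupOf (SubG x)).index = p ^ k) ∧
      SubG x = CNclosure N x ⊔ (P : Subgroup G) :=
  stmt_7_general p hp N hN hN' hquot x P hxP
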